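/- arXiv:1307.0321 — 2 statements merged into one kernel-verified Lean document; each statement's English description precedes it below -/
import Mathlib

section
/- Let n ≥ 1, k ∈ ℕ, and let φ be a real-valued function on a punctured neighborhood of 0 in ℝⁿ. Suppose there exist homogeneous polynomials P_p of degree p and Q_{p−1} of degree p−1 on ℝⁿ (for 0 ≤ p ≤ k, with Q_{−1} := 0) such that φ(ȳ) − Σ_{p=0}^{k} (P_p(ȳ) + |ȳ|·Q_{p−1}(ȳ)) is o_k(r^k). Then there exists a function f of class C^k on a neighborhood of 0 in ℝ^{1+n} whose trace on the light cone C_O equals φ, i.e. f(|ȳ|, ȳ) = φ(ȳ) for all ȳ ≠ 0 near 0. -/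
/-! Replacing `‖ȳ‖` by the time coordinate `y⁰` turns the expansion into a polynomial in
`(y⁰, ȳ)` whose trace on the cone is the expansion itself. The remainder `ρ`, extended by `0` at
the origin, is already `C^k` as a function of `ȳ` alone: `D^ℓ ρ = o(‖ȳ‖^(k-ℓ))`, so for `ℓ < k`
the derivative `D^ℓ ρ` is `o(‖ȳ‖)` and hence differentiable at `0` with derivative `0`, and for
`ℓ ≤ k` it tends to `0`, which makes the zero extension of the Taylor series continuous. -/

open Filter Topology MeasureTheory

/-- `φ` is `o_m(r^k)` near the origin of `ℝⁿ` (punctured): `φ` is `C^m` on a punctured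
ball around `0`, and for every `ℓ ≤ m` one has `‖y‖^(ℓ-k) ‖D^ℓ φ(y)‖ → 0` as `y → 0`,
`y ≠ 0`. -/
def IsLittleOCone (n m : ℕ) (k : ℤ) (φ : EuclideanSpace ℝ (Fin n) → ℝ) : Prop :=
  ∃ ε > (0 : ℝ), ContDiffOn ℝ (m : ℕ∞) φ
      (Metric.ball (0 : EuclideanSpace ℝ (Fin n)) ε \ {0}) ∧
    ∀ ℓ : ℕ, ℓ ≤ m →
      Tendsto (fun y : EuclideanSpace ℝ (Fin n) =>
          ‖y‖ ^ ((ℓ : ℝ) - (k : ℝ)) * ‖iteratedFDeriv ℝ ℓ φ y‖)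
        (𝓝[≠] (0 : EuclideanSpace ℝ (Fin n))) (𝓝 0)

open Function Asymptotics

theorem MvPolynomial.contDiff_eval {𝕜 E σ : Type*} [NontriviallyNormedField 𝕜]
    [NormedAddCommGroup E] [NormedSpace 𝕜 E] {n : WithTop ℕ∞} (q : MvPolynomial σ 𝕜)
    {x : E → σ → 𝕜} (hx : ∀ i, ContDiff 𝕜 n fun z => x z i) :
    ContDiff 𝕜 n fun z => eval (x z) q := by
  induction q using MvPolynomial.induction_on with
  | C a => simpa using contDiff_const
  | add p q hp hq => simpa using hp.add hq
  | mul_X p i hp => simpa using hp.mul (hx i)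

section PuncturedNeighborhood

variable {E F : Type*} [NormedAddCommGroup E] [NormedAddCommGroup F]

theorem isLittleO_norm_rpow_of_tendsto_rpow_neg_mul {a : ℝ} {h : E → F}
    (H : Tendsto (fun y => ‖y‖ ^ (-a) * ‖h y‖) (𝓝[≠] 0) (𝓝 0)) :
    h =o[𝓝[≠] 0] fun y => ‖y‖ ^ a := by
  refine isLittleO_iff.2 fun c hc => ?_
  filter_upwards [H.eventually_le_const hc, self_mem_nhdsWithin] with y hyc hy
  have hy0 : 0 < ‖y‖ := norm_pos_iff.2 hy
  calc ‖h y‖ = ‖y‖ ^ a * (‖y‖ ^ (-a) * ‖h y‖) := by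
        rw [← mul_assoc, ← Real.rpow_add hy0, add_neg_cancel, Real.rpow_zero, one_mul]
    _ ≤ ‖y‖ ^ a * c := by gcongr
    _ = c * ‖‖y‖ ^ a‖ := by rw [Real.norm_of_nonneg (by positivity), mul_comm]

theorem isBigO_norm_rpow_of_le {a b : ℝ} (hab : a ≤ b) :
    (fun y : E => ‖y‖ ^ b) =O[𝓝[≠] 0] fun y => ‖y‖ ^ a := by
  refine IsBigO.of_bound 1 ?_
  have hle : ∀ᶠ y : E in 𝓝 0, ‖y‖ ≤ 1 := tendsto_norm_zero.eventually_le_const one_pos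
  filter_upwards [nhdsWithin_le_nhds hle, self_mem_nhdsWithin] with y hy1 hy
  have hy0 : 0 < ‖y‖ := norm_pos_iff.2 hy
  rw [Real.norm_of_nonneg (by positivity), Real.norm_of_nonneg (by positivity), one_mul]
  exact Real.rpow_le_rpow_of_exponent_ge hy0 hy1 hab

theorem Asymptotics.IsLittleO.tendsto_zero_of_norm_rpow {a : ℝ} (ha : 0 ≤ a) {h : E → F}
    (ho : h =o[𝓝[≠] 0] fun y => ‖y‖ ^ a) : Tendsto h (𝓝[≠] 0) (𝓝 0) :=
  (isLittleO_one_iff ℝ).1 ((ho.trans_isBigO (isBigO_norm_rpow_of_le ha)).congr_right (by simp))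

theorem Asymptotics.IsLittleO.isLittleO_id_of_norm_rpow {a : ℝ} (ha : 1 ≤ a) {h : E → F}
    (ho : h =o[𝓝[≠] 0] fun y => ‖y‖ ^ a) : h =o[𝓝[≠] 0] fun y => y :=
  isLittleO_norm_right.1 ((ho.trans_isBigO (isBigO_norm_rpow_of_le ha)).congr_right (by simp))

variable [NormedSpace ℝ E] [NormedSpace ℝ F]

theorem hasFDerivAt_update_zero_of_isLittleO [DecidableEq E] {h : E → F}
    (ho : h =o[𝓝[≠] 0] fun y => y) :
    HasFDerivAt (update h 0 0) (0 : E →L[ℝ] F) 0 := by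
  rw [hasFDerivAt_iff_isLittleO_nhds_zero, ← nhdsNE_sup_pure]
  refine IsLittleO.sup ?_ (isLittleO_pure.2 (by simp))
  refine ho.congr' ?_ EventuallyEq.rfl
  filter_upwards [self_mem_nhdsWithin] with y hy
  simp [update_of_ne hy]

theorem ContDiffOn.hasFTaylorSeriesUpToOn_of_isOpen {n : ℕ∞} {f : E → F} {s : Set E}
    (hf : ContDiffOn ℝ n f s) (hs : IsOpen s) :
    HasFTaylorSeriesUpToOn n f (ftaylorSeries ℝ f) s :=
  (hf.ftaylorSeriesWithin hs.uniqueDiffOn).congr_series fun m _ _ hx =>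
    iteratedFDerivWithin_of_isOpen m hs hx

theorem contDiffOn_update_zero_of_isLittleO [DecidableEq E] {k : ℕ} {U : Set E} {g : E → F}
    (hU : IsOpen U) (hg : ContDiffOn ℝ k g (U \ {0}))
    (ho : ∀ ℓ ≤ k, iteratedFDeriv ℝ ℓ g =o[𝓝[≠] 0] fun y => ‖y‖ ^ ((k : ℝ) - ℓ)) :
    ContDiffOn ℝ k (update g 0 0) U := by
  have hV : IsOpen (U \ {0}) := hU.sdiff isClosed_singleton
  have hT := hg.hasFTaylorSeriesUpToOn_of_isOpen hV
  refine HasFTaylorSeriesUpToOn.contDiffOn (f' := fun y ℓ => update (iteratedFDeriv ℝ ℓ g) 0 0 y)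
    ⟨fun x _ => ?_, fun m hm x hx => ?_, fun m hm x hx => ?_⟩
  · rcases eq_or_ne x 0 with rfl | hx0
    · simp
    · simp [update_of_ne hx0]
  · rcases eq_or_ne x 0 with rfl | hx0
    · have hmk : (m : ℝ) + 1 ≤ k := by exact_mod_cast hm
      have hsmall : iteratedFDeriv ℝ m g =o[𝓝[≠] 0] fun y => y :=
        (ho m (by exact_mod_cast hm.le)).isLittleO_id_of_norm_rpow (by linarith)
      refine (hasFDerivAt_update_zero_of_isLittleO hsmall).hasFDerivWithinAt.congr_fderiv ?_
      ext
      simp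
    · have hxV : x ∈ U \ {0} := ⟨hx, hx0⟩
      rw [update_of_ne hx0]
      refine (((hT.fderivWithin m hm x hxV).hasFDerivAt (hV.mem_nhds hxV)).congr_of_eventuallyEq
        ?_).hasFDerivWithinAt
      filter_upwards [eventually_ne_nhds hx0] with y hy
      exact update_of_ne hy _ _
  · rcases eq_or_ne x 0 with rfl | hx0
    · have hmk : (m : ℝ) ≤ k := by exact_mod_cast hm
      refine (continuousAt_update_same.2 ?_).continuousWithinAt
      exact (ho m (by exact_mod_cast hm)).tendsto_zero_of_norm_rpow (by linarith)
    · have hxV : x ∈ U \ {0} := ⟨hx, hx0⟩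
      refine (((hT.cont m hm).continuousAt (hV.mem_nhds hxV)).congr ?_).continuousWithinAt
      filter_upwards [eventually_ne_nhds hx0] with y hy
      exact (update_of_ne hy _ _).symm

end PuncturedNeighborhood

theorem admissible_expansion_is_trace_general
    (n k : ℕ)
    (φ : EuclideanSpace ℝ (Fin n) → ℝ)
    (P Q : ℕ → MvPolynomial (Fin n) ℝ)
    (h : IsLittleOCone n k (k : ℤ) (fun y =>
        φ y - ∑ p ∈ Finset.range (k + 1),
          (MvPolynomial.eval (fun i => y i) (P p)
            + ‖y‖ * MvPolynomial.eval (fun i => y i) (Q p)))) :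
    ∃ (f : ℝ × EuclideanSpace ℝ (Fin n) → ℝ) (ε : ℝ), 0 < ε ∧
      ContDiffOn ℝ (k : ℕ∞) f (Metric.ball (0 : ℝ × EuclideanSpace ℝ (Fin n)) ε) ∧
      ∀ y : EuclideanSpace ℝ (Fin n), y ≠ 0 → ‖y‖ < ε → f (‖y‖, y) = φ y := by
  classical
  set expansion : ℝ × EuclideanSpace ℝ (Fin n) → ℝ := fun z => ∑ p ∈ Finset.range (k + 1),
    (MvPolynomial.eval (fun i => z.2 i) (P p) + z.1 * MvPolynomial.eval (fun i => z.2 i) (Q p))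
  obtain ⟨ε, hε, hρ, hρ_small⟩ := h
  set ρ := fun y => φ y - expansion (‖y‖, y)
  have hcoord (i : Fin n) : ContDiff ℝ k fun z : ℝ × EuclideanSpace ℝ (Fin n) => z.2 i :=
    (contDiff_apply ℝ ℝ i).comp (PiLp.contDiff_ofLp.comp contDiff_snd)
  have hexpansion : ContDiff ℝ k expansion := ContDiff.sum fun p _ =>
    ((P p).contDiff_eval hcoord).add (contDiff_fst.mul ((Q p).contDiff_eval hcoord))
  have hρ0 : ContDiffOn ℝ k (update ρ 0 0) (Metric.ball 0 ε) :=
    contDiffOn_update_zero_of_isLittleO Metric.isOpen_ball hρ fun ℓ hℓ =>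
      isLittleO_norm_rpow_of_tendsto_rpow_neg_mul <| by
        simpa only [neg_sub, Int.cast_natCast] using hρ_small ℓ hℓ
  refine ⟨fun z => expansion z + update ρ 0 0 z.2, ε, hε,
    hexpansion.contDiffOn.add (hρ0.comp contDiffOn_snd fun z hz => ?_), fun y hy _ => ?_⟩
  · simpa using (norm_snd_le z).trans_lt (mem_ball_zero_iff.1 hz)
  · simp [update_of_ne hy, ρ]

/-- if `φ`, defined on a punctured neighborhood of `0` in `ℝⁿ`, admits an
admissible expansion of order `k` with remainder `o_k(r^k)`, then `φ` is the trace
`ȳ ↦ f(|ȳ|, ȳ)` on the light cone of a `C^k` function `f` defined near `0` in `ℝ^{1+n}`. -/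
theorem admissible_expansion_is_trace
    (n k : ℕ) (hn : 1 ≤ n)
    (φ : EuclideanSpace ℝ (Fin n) → ℝ)
    (P Q : ℕ → MvPolynomial (Fin n) ℝ)
    (hP : ∀ p, p ≤ k → (P p).IsHomogeneous p)
    (hQ0 : Q 0 = 0)
    (hQ : ∀ p, 1 ≤ p → p ≤ k → (Q p).IsHomogeneous (p - 1))
    (h : IsLittleOCone n k (k : ℤ) (fun y =>
        φ y - ∑ p ∈ Finset.range (k + 1),
          (MvPolynomial.eval (fun i => y i) (P p)
            + ‖y‖ * MvPolynomial.eval (fun i => y i) (Q p)))) :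
    ∃ (f : ℝ × EuclideanSpace ℝ (Fin n) → ℝ) (ε : ℝ), 0 < ε ∧
      ContDiffOn ℝ (k : ℕ∞) f (Metric.ball (0 : ℝ × EuclideanSpace ℝ (Fin n)) ε) ∧
      ∀ y : EuclideanSpace ℝ (Fin n), y ≠ 0 → ‖y‖ < ε → f (‖y‖, y) = φ y :=
  admissible_expansion_is_trace_general n k φ P Q h
end

section
/- Let ε > 0, let h : (0, ε] → ℝ be continuous and bounded, and let c ∈ ℝ. Then there exist δ ∈ (0, ε] and a unique C¹ function y : (0, δ] → ℝ such that y′(r) = y(r)² + (1/2) h(r) for all r ∈ (0, δ] and y(r) → c as r → 0⁺. Moreover y is bounded on (0, δ] and r·y(r) → 0 as r → 0⁺. -/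
/-!
Substituting `y = u + H` with `H r = ∫ t in 0..r, h t / 2` turns the equation into
`u' = (u + H) ^ 2`, whose right-hand side is continuous up to `r = 0` even though `h` need not be;
Picard–Lindelöf on `[0, δ]` gives a solution with `u 0 = c`. Any solution tending to `c` extends
continuously to `[0, δ]`, hence is bounded, so `x ↦ x ^ 2 + h r / 2` is Lipschitz along two such
solutions. Grönwall's estimate on `[s, t]` followed by `s → 0⁺` shows that they coincide.
-/

open Filter Topology MeasureTheory Set Metric NNReal

theorem lipschitzOnWith_sq_closedBall {𝕜 : Type*} [SeminormedRing 𝕜] (R : ℝ≥0) :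
    LipschitzOnWith (2 * R) (fun x : 𝕜 => x ^ 2) (closedBall 0 R) := by
  refine LipschitzOnWith.of_dist_le_mul fun x hx y hy => ?_
  rw [mem_closedBall_zero_iff] at hx hy
  rw [dist_eq_norm, dist_eq_norm]
  calc ‖x ^ 2 - y ^ 2‖ = ‖x * (x - y) + (x - y) * y‖ := by noncomm_ring
    _ ≤ ‖x‖ * ‖x - y‖ + ‖x - y‖ * ‖y‖ :=
      (norm_add_le _ _).trans (add_le_add (norm_mul_le _ _) (norm_mul_le _ _))
    _ ≤ R * ‖x - y‖ + ‖x - y‖ * R := by gcongr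
    _ = 2 * R * ‖x - y‖ := by ring

theorem exists_norm_le_of_continuousOn_Ioc {E : Type*} [SeminormedAddCommGroup E]
    {f : ℝ → E} {a b : ℝ} {c : E} (hf : ContinuousOn f (Ioc a b))
    (hc : Tendsto f (𝓝[>] a) (𝓝 c)) : ∃ M, ∀ x ∈ Ioc a b, ‖f x‖ ≤ M := by
  classical
  have hext : ContinuousOn (Function.update f a c) (Icc a b) := by
    intro x hx
    rcases hx.1.eq_or_lt with rfl | hax
    · rw [continuousWithinAt_update_same]
      exact hc.mono_left (nhdsWithin_mono _ fun y hy => hy.1.1.lt_of_ne' hy.2)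
    · have hIoc : Ioc a b ∈ 𝓝[Icc a b] x :=
        mem_of_superset (inter_mem_nhdsWithin _ (Ioi_mem_nhds hax)) fun y hy => ⟨hy.2, hy.1.2⟩
      rw [continuousWithinAt_update_of_ne hax.ne']
      exact (hf x ⟨hax, hx.2⟩).mono_of_mem_nhdsWithin hIoc
  obtain ⟨M, hM⟩ := isCompact_Icc.exists_bound_of_continuousOn hext
  exact ⟨M, fun x hx => by
    simpa [Function.update_of_ne hx.1.ne'] using hM x (Ioc_subset_Icc_self hx)⟩

theorem hasDerivWithinAt_integral_Icc_of_continuousOn_Ioc {E : Type*} [NormedAddCommGroup E]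
    [NormedSpace ℝ E] [CompleteSpace E] {g : ℝ → E} {a b r : ℝ} (hint : IntegrableOn g (Ioc a b))
    (hg : ContinuousOn g (Ioc a b)) (hr : r ∈ Ioc a b) :
    HasDerivWithinAt (fun x => ∫ t in a..x, g t) (g r) (Icc a b) r := by
  have : Fact (r ∈ Icc a b) := ⟨Ioc_subset_Icc_self hr⟩
  have hIoc : Ioc a b ∈ 𝓝[Icc a b] r :=
    mem_of_superset (inter_mem_nhdsWithin _ (Ioi_mem_nhds hr.1)) fun y hy => ⟨hy.2, hy.1.2⟩
  refine intervalIntegral.integral_hasDerivWithinAt_right ?_ ?_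
    ((hg r hr).mono_of_mem_nhdsWithin hIoc)
  · exact (intervalIntegrable_iff_integrableOn_Ioc_of_le hr.1.le).2
      (hint.mono_set (Ioc_subset_Ioc_right hr.2))
  · exact (hg.stronglyMeasurableAtFilter_nhdsWithin measurableSet_Ioc r).filter_mono
      (nhdsWithin_le_of_mem hIoc)

theorem ODE_solution_unique_of_mem_Ioc_of_tendsto_dist {E : Type*} [NormedAddCommGroup E]
    [NormedSpace ℝ E] {v : ℝ → E → E} {s : ℝ → Set E} {K : ℝ≥0} {f g : ℝ → E} {a b : ℝ}
    (hv : ∀ t ∈ Ioc a b, LipschitzOnWith K (v t) (s t))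
    (hf : ∀ t ∈ Ioc a b, HasDerivWithinAt f (v t (f t)) (Ioc a b) t)
    (hfs : ∀ t ∈ Ioc a b, f t ∈ s t)
    (hg : ∀ t ∈ Ioc a b, HasDerivWithinAt g (v t (g t)) (Ioc a b) t)
    (hgs : ∀ t ∈ Ioc a b, g t ∈ s t)
    (hfg : Tendsto (fun t => dist (f t) (g t)) (𝓝[>] a) (𝓝 0)) :
    EqOn f g (Ioc a b) := by
  intro t ht
  have hgronwall : ∀ τ ∈ Ioc a t,
      dist (f t) (g t) ≤ dist (f τ) (g τ) * Real.exp (K * (t - τ)) := by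
    intro τ hτ
    have hsub : Icc τ t ⊆ Ioc a b := fun x hx => ⟨hτ.1.trans_le hx.1, hx.2.trans ht.2⟩
    have hright : ∀ φ : ℝ → E, (∀ t ∈ Ioc a b, HasDerivWithinAt φ (v t (φ t)) (Ioc a b) t) →
        ∀ x ∈ Ico τ t, HasDerivWithinAt φ (v x (φ x)) (Ici x) x := fun φ hφ x hx =>
      ((hφ x (hsub (Ico_subset_Icc_self hx))).hasDerivAt
        (Ioc_mem_nhds (hτ.1.trans_le hx.1) (hx.2.trans_le ht.2))).hasDerivWithinAt
    have hcont : ∀ φ : ℝ → E, (∀ t ∈ Ioc a b, HasDerivWithinAt φ (v t (φ t)) (Ioc a b) t) →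
        ContinuousOn φ (Icc τ t) := fun φ hφ x hx =>
      ((hφ x (hsub hx)).continuousWithinAt).mono hsub
    exact dist_le_of_trajectories_ODE_of_mem (fun x hx => hv x (hsub (Ico_subset_Icc_self hx)))
      (hcont f hf) (hright f hf) (fun x hx => hfs x (hsub (Ico_subset_Icc_self hx)))
      (hcont g hg) (hright g hg) (fun x hx => hgs x (hsub (Ico_subset_Icc_self hx)))
      le_rfl t ⟨hτ.2, le_rfl⟩
  have hexp : Tendsto (fun τ => Real.exp (K * (t - τ))) (𝓝[>] a) (𝓝 (Real.exp (K * (t - a)))) :=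
    ((continuous_const.mul (continuous_const.sub continuous_id)).rexp.tendsto a).mono_left
      nhdsWithin_le_nhds
  have hlim : Tendsto (fun τ => dist (f τ) (g τ) * Real.exp (K * (t - τ))) (𝓝[>] a) (𝓝 0) := by
    simpa using hfg.mul hexp
  exact dist_le_zero.1 (ge_of_tendsto hlim (eventually_of_mem (Ioc_mem_nhdsGT ht.1) hgronwall))

theorem exists_hasDerivWithinAt_add_sq {H : ℝ → ℝ} {a b : ℝ} (hab : a < b)
    (hH : ContinuousOn H (Icc a b)) (c : ℝ) :
    ∃ b', a < b' ∧ b' ≤ b ∧ ∃ u : ℝ → ℝ, u a = c ∧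
      ∀ t ∈ Icc a b', HasDerivWithinAt u ((u t + H t) ^ 2) (Icc a b') t := by
  obtain ⟨B, hB⟩ := isCompact_Icc.exists_bound_of_continuousOn hH
  set R : ℝ≥0 := ⟨|c| + 1 + max B 0, by positivity⟩
  have hR : (R : ℝ) = |c| + 1 + max B 0 := rfl
  -- the field is bounded by `R ^ 2` on `closedBall c 1`, so on an interval of length
  -- `1 / (R ^ 2 + 1)` solutions cannot leave that ball
  set b' := min b (a + 1 / (R ^ 2 + 1))
  have hab' : a < b' := lt_min hab (by simp only [lt_add_iff_pos_right]; positivity)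
  have hIcc : Icc a b' ⊆ Icc a b := Icc_subset_Icc_right (min_le_left _ _)
  have hmaps : ∀ t ∈ Icc a b', MapsTo (· + H t) (closedBall c 1) (closedBall 0 R) := by
    intro t ht x hx
    rw [mem_closedBall, Real.dist_eq] at hx
    have hHt : |H t| ≤ max B 0 := (hB t (hIcc ht)).trans (le_max_left _ _)
    rw [mem_closedBall_zero_iff, Real.norm_eq_abs]
    calc |x + H t| = |c + (x - c) + H t| := by ring_nf
      _ ≤ |c| + |x - c| + |H t| := (abs_add_le _ _).trans (by gcongr; exact abs_add_le _ _)
      _ ≤ R := by rw [hR]; linarith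
  have hpl : IsPicardLindelof (fun t x => (x + H t) ^ 2) (tmin := a) (tmax := b')
      ⟨a, le_rfl, hab'.le⟩ c 1 0 (R ^ 2) (2 * R) := by
    refine ⟨fun t ht => ?_, fun _ _ => ?_, fun t ht x hx => ?_, ?_⟩
    · have := (lipschitzOnWith_sq_closedBall R).comp
        (isometry_add_right (H t)).lipschitz.lipschitzOnWith (hmaps t ht)
      rwa [mul_one] at this
    · exact (continuousOn_const.add (hH.mono hIcc)).pow 2
    · have := mem_closedBall_zero_iff.1 (hmaps t ht hx)
      rw [norm_pow, NNReal.coe_pow]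
      gcongr
    · have hb'a : b' - a ≤ 1 / (R ^ 2 + 1) := by
        linarith [min_le_right b (a + 1 / (R ^ 2 + 1))]
      simp only [sub_self, max_eq_left (sub_nonneg.2 hab'.le), NNReal.coe_pow, NNReal.coe_one,
        NNReal.coe_zero, sub_zero]
      calc (R : ℝ) ^ 2 * (b' - a) ≤ R ^ 2 * (1 / (R ^ 2 + 1)) := by gcongr
        _ ≤ 1 := by rw [mul_one_div, div_le_one (by positivity)]; linarith
  obtain ⟨u, hu0, hu⟩ := hpl.exists_eq_forall_mem_Icc_hasDerivWithinAt₀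
  exact ⟨b', hab', min_le_left _ _, u, hu0, hu⟩

theorem exists_riccati_solution_tendsto {g : ℝ → ℝ} {a b : ℝ} (hab : a < b)
    (hint : IntegrableOn g (Ioc a b)) (hg : ContinuousOn g (Ioc a b)) (c : ℝ) :
    ∃ b', a < b' ∧ b' ≤ b ∧ ∃ y : ℝ → ℝ,
      (∀ r ∈ Ioc a b', HasDerivWithinAt y (y r ^ 2 + g r) (Ioc a b') r) ∧
      Tendsto y (𝓝[>] a) (𝓝 c) := by
  set H : ℝ → ℝ := fun x => ∫ t in a..x, g t
  have hH : ContinuousOn H (Icc a b) := by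
    rw [← uIcc_of_le hab.le]
    refine intervalIntegral.continuousOn_primitive_interval ?_
    rwa [uIcc_of_le hab.le, integrableOn_Icc_iff_integrableOn_Ioc]
  obtain ⟨b', hab', hb'b, u, hu0, hu⟩ := exists_hasDerivWithinAt_add_sq hab hH c
  have hIcc : Icc a b' ⊆ Icc a b := Icc_subset_Icc_right hb'b
  refine ⟨b', hab', hb'b, fun x => u x + H x, fun r hr => ?_, ?_⟩
  · have hHr := hasDerivWithinAt_integral_Icc_of_continuousOn_Ioc hint hg ⟨hr.1, hr.2.trans hb'b⟩
    exact ((hu r (Ioc_subset_Icc_self hr)).add (hHr.mono hIcc)).mono Ioc_subset_Icc_self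
  · have hcont : ContinuousWithinAt (fun x => u x + H x) (Icc a b') a :=
      (hu a ⟨le_rfl, hab'.le⟩).continuousWithinAt.add ((hH a ⟨le_rfl, hab.le⟩).mono hIcc)
    have hya : u a + H a = c := by simp [H, hu0]
    rw [ContinuousWithinAt, hya] at hcont
    exact hcont.mono_left
      (nhdsWithin_le_of_mem (mem_of_superset (Ioc_mem_nhdsGT hab') Ioc_subset_Icc_self))

theorem riccati_eqOn_of_tendsto {g : ℝ → ℝ} {a b c : ℝ} {y₁ y₂ : ℝ → ℝ}
    (hy₁ : ∀ r ∈ Ioc a b, HasDerivWithinAt y₁ (y₁ r ^ 2 + g r) (Ioc a b) r)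
    (hc₁ : Tendsto y₁ (𝓝[>] a) (𝓝 c))
    (hy₂ : ∀ r ∈ Ioc a b, HasDerivWithinAt y₂ (y₂ r ^ 2 + g r) (Ioc a b) r)
    (hc₂ : Tendsto y₂ (𝓝[>] a) (𝓝 c)) :
    EqOn y₁ y₂ (Ioc a b) := by
  obtain ⟨M₁, hM₁⟩ :=
    exists_norm_le_of_continuousOn_Ioc (fun r hr => (hy₁ r hr).continuousWithinAt) hc₁
  obtain ⟨M₂, hM₂⟩ :=
    exists_norm_le_of_continuousOn_Ioc (fun r hr => (hy₂ r hr).continuousWithinAt) hc₂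
  set R : ℝ≥0 := (max M₁ M₂).toNNReal
  have hR₁ : M₁ ≤ R := (le_max_left _ _).trans (Real.le_coe_toNNReal _)
  have hR₂ : M₂ ≤ R := (le_max_right _ _).trans (Real.le_coe_toNNReal _)
  refine ODE_solution_unique_of_mem_Ioc_of_tendsto_dist (v := fun r x => x ^ 2 + g r)
    (s := fun _ => closedBall 0 R) (K := 2 * R) (fun r _ => ?_) hy₁
    (fun r hr => mem_closedBall_zero_iff.2 ((hM₁ r hr).trans hR₁)) hy₂
    (fun r hr => mem_closedBall_zero_iff.2 ((hM₂ r hr).trans hR₂)) (by simpa using hc₁.dist hc₂)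
  have := (isometry_add_right (g r)).lipschitz.comp_lipschitzOnWith
    (lipschitzOnWith_sq_closedBall R)
  rwa [one_mul] at this

/-- the Riccati equation `y' = y² + h/2` on `(0,δ]`, with `h` continuous
and bounded on `(0,ε]` and prescribed limit `c` at the singular endpoint `r = 0`, has
(for some `δ ∈ (0,ε]`) a unique `C¹` solution; this solution is bounded and satisfies
`r·y(r) → 0` as `r → 0⁺`. -/
theorem riccati_singular_existence_uniqueness
    (ε : ℝ) (hε : 0 < ε) (h : ℝ → ℝ)
    (hc : ContinuousOn h (Set.Ioc 0 ε))
    (hb : ∃ M : ℝ, ∀ r ∈ Set.Ioc (0 : ℝ) ε, |h r| ≤ M)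
    (c : ℝ) :
    ∃ δ : ℝ, 0 < δ ∧ δ ≤ ε ∧ ∃ y : ℝ → ℝ,
      (∀ r ∈ Set.Ioc (0 : ℝ) δ,
        HasDerivWithinAt y ((y r) ^ 2 + (1 / 2) * h r) (Set.Ioc 0 δ) r) ∧
      Tendsto y (𝓝[>] (0 : ℝ)) (𝓝 c) ∧
      (∃ M : ℝ, ∀ r ∈ Set.Ioc (0 : ℝ) δ, |y r| ≤ M) ∧
      Tendsto (fun r : ℝ => r * y r) (𝓝[>] (0 : ℝ)) (𝓝 0) ∧
      ∀ y' : ℝ → ℝ,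
        (∀ r ∈ Set.Ioc (0 : ℝ) δ,
          HasDerivWithinAt y' ((y' r) ^ 2 + (1 / 2) * h r) (Set.Ioc 0 δ) r) →
        Tendsto y' (𝓝[>] (0 : ℝ)) (𝓝 c) →
        Set.EqOn y' y (Set.Ioc 0 δ) := by
  obtain ⟨M, hM⟩ := hb
  have hint : IntegrableOn h (Ioc 0 ε) :=
    IntegrableOn.of_bound measure_Ioc_lt_top (hc.aestronglyMeasurable measurableSet_Ioc) M
      ((ae_restrict_iff' measurableSet_Ioc).2 (Eventually.of_forall hM))
  obtain ⟨δ, hδ, hδε, y, hy, hyc⟩ :=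
    exists_riccati_solution_tendsto hε (hint.const_mul (1 / 2)) (continuousOn_const.mul hc) c
  obtain ⟨My, hMy⟩ :=
    exists_norm_le_of_continuousOn_Ioc (fun r hr => (hy r hr).continuousWithinAt) hyc
  refine ⟨δ, hδ, hδε, y, hy, hyc, ⟨My, hMy⟩, ?_,
    fun y' hy' hy'c => riccati_eqOn_of_tendsto hy' hy'c hy hyc⟩
  simpa using (tendsto_id.mono_left nhdsWithin_le_nhds).mul hyc
end
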